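/- arXiv:1802.07122 — 5 statements merged into one kernel-verified Lean document; each statement's English description precedes it below -/
import Mathlib

section
/- For all x,y ∈ ℕ^d with |x| = |y| = N and every real ρ, m(x;N,p) m(y;N,p) (1 + Σ_{n=1}^N ρ^n Q_n(x,y;N,p)) = Σ_{z∈ℕ^d: z ≤ x, z ≤ y} ρ^{|z|} (1−ρ)^{N−|z|} (N!/(z_1!⋯z_d!(N−|z|)!)) ∏_{i=1}^d p_i^{z_i} · ((N−|z|)!/∏_{i=1}^d (x_i−z_i)!) ∏_{i=1}^d p_i^{x_i−z_i} · ((N−|z|)!/∏_{i=1}^d (y_i−z_i)!) ∏_{i=1}^d p_i^{y_i−z_i} (the Poisson kernel identity for the reproducing kernel polynomials on the multinomial). -/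
/-!
Write `s = |z|`. Expanding `Q_n` and exchanging the sums over `n` and `z`, the coefficient of the
`z`-term is `∑_{n = s}^{N} ρ^n C(N-s, n-s) (-1)^(n-s) = ρ^s (1-ρ)^(N-s)` (binomial theorem) times a
weight independent of `n` and `ρ`. Multiplied by `m(x) m(y)`, this weight becomes the trinomial
product on the right once `x_i! = (x_i)_[z_i] (x_i - z_i)!`, `p^x = p^z p^(x-z)` and
`C(N,s) s! = N_[s] = N!/(N-s)!` are substituted.
-/

open Finset

/-- Multinomial probability `m(x;N,p)`. -/
noncomputable def mProb (d N : ℕ) (p : Fin d → ℝ) (x : Fin d → ℕ) : ℝ :=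
  ((N.factorial : ℝ) / ∏ i, ((x i).factorial : ℝ)) * ∏ i, (p i) ^ (x i)

/-- Reproducing kernel polynomial `Q_n(x,y;N,p)` on the multinomial distribution. -/
noncomputable def kernelQ (d N : ℕ) (p : Fin d → ℝ) (n : ℕ) (x y : Fin d → ℕ) : ℝ :=
  ∑ z ∈ (Finset.Iic (x ⊓ y)).filter (fun z => ∑ i, z i ≤ n),
    (N.choose (∑ i, z i) : ℝ) * ((N - ∑ i, z i).choose (n - ∑ i, z i) : ℝ) *
      (-1 : ℝ) ^ (n - ∑ i, z i) *
      (((∑ i, z i).factorial : ℝ) / ∏ i, ((z i).factorial : ℝ)) *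
      (∏ i, ((x i).descFactorial (z i) : ℝ) * ((y i).descFactorial (z i) : ℝ) / (p i) ^ (z i)) /
      ((N.descFactorial (∑ i, z i) : ℝ)) ^ 2

noncomputable def kernelWeight (d N : ℕ) (p : Fin d → ℝ) (x y z : Fin d → ℕ) : ℝ :=
  (N.choose (∑ i, z i) : ℝ) * (((∑ i, z i).factorial : ℝ) / ∏ i, ((z i).factorial : ℝ)) *
    (∏ i, ((x i).descFactorial (z i) : ℝ) * ((y i).descFactorial (z i) : ℝ) / (p i) ^ (z i)) /
    ((N.descFactorial (∑ i, z i) : ℝ)) ^ 2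

theorem prod_factorial_eq_prod_descFactorial_mul_prod_factorial_sub {ι : Type*} (s : Finset ι)
    {x z : ι → ℕ} (h : ∀ i ∈ s, z i ≤ x i) :
    ∏ i ∈ s, (x i).factorial
      = (∏ i ∈ s, (x i).descFactorial (z i)) * ∏ i ∈ s, (x i - z i).factorial := by
  rw [← prod_mul_distrib]
  exact prod_congr rfl fun i hi => by rw [mul_comm, Nat.factorial_mul_descFactorial (h i hi)]

theorem prod_pow_eq_prod_pow_mul_prod_pow_sub {ι M : Type*} [CommMonoid M] (s : Finset ι)
    (a : ι → M) {x z : ι → ℕ} (h : ∀ i ∈ s, z i ≤ x i) :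
    ∏ i ∈ s, a i ^ x i = (∏ i ∈ s, a i ^ z i) * ∏ i ∈ s, a i ^ (x i - z i) := by
  rw [← prod_mul_distrib]
  exact prod_congr rfl fun i hi => by rw [← pow_add, Nat.add_sub_cancel' (h i hi)]

theorem sum_range_pow_mul_choose_mul_neg_one_pow {R : Type*} [CommRing R] (ρ : R) (M : ℕ) :
    ∑ k ∈ range (M + 1), ρ ^ k * M.choose k * (-1) ^ k = (1 - ρ) ^ M := by
  rw [sub_eq_neg_add, add_pow]
  exact sum_congr rfl fun k _ => by rw [neg_pow, one_pow, mul_one]; ring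

theorem sum_range_ite_pow_mul_choose_sub {R : Type*} [CommRing R] (ρ : R) {s N : ℕ} (hs : s ≤ N) :
    ∑ n ∈ range (N + 1), (if s ≤ n then ρ ^ n * (N - s).choose (n - s) * (-1) ^ (n - s) else 0)
      = ρ ^ s * (1 - ρ) ^ (N - s) := by
  rw [show N + 1 = s + (N - s + 1) by omega, sum_range_add,
    sum_eq_zero fun n hn => if_neg (by simpa using hn), zero_add,
    ← sum_range_pow_mul_choose_mul_neg_one_pow, mul_sum]
  exact sum_congr rfl fun k _ => by simp only [le_add_iff_nonneg_right, zero_le, if_true,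
    Nat.add_sub_cancel_left, pow_add]; ring

section Kernel

variable {d N : ℕ} {p : Fin d → ℝ} {x y : Fin d → ℕ}

theorem kernelQ_zero : kernelQ d N p 0 x y = 1 := by
  have hzero : (Iic (x ⊓ y)).filter (fun z => ∑ i, z i ≤ 0) = {0} := by
    ext z
    simp only [mem_filter, mem_Iic, mem_singleton, Nat.le_zero, sum_eq_zero_iff, mem_univ,
      true_implies]
    exact ⟨fun h => funext h.2, by rintro rfl; exact ⟨fun _ => Nat.zero_le _, fun _ => rfl⟩⟩
  rw [kernelQ, hzero]
  simp

theorem kernelQ_eq_sum_ite (n : ℕ) :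
    kernelQ d N p n x y = ∑ z ∈ Iic (x ⊓ y), if ∑ i, z i ≤ n then
      (N - ∑ i, z i).choose (n - ∑ i, z i) * (-1) ^ (n - ∑ i, z i) * kernelWeight d N p x y z
      else 0 := by
  rw [kernelQ, sum_filter]
  exact sum_congr rfl fun z _ => by split_ifs <;> simp only [kernelWeight]; ring

theorem sum_range_pow_mul_kernelQ (hx : ∑ i, x i ≤ N) (ρ : ℝ) :
    ∑ n ∈ range (N + 1), ρ ^ n * kernelQ d N p n x y
      = ∑ z ∈ Iic (x ⊓ y),
          ρ ^ (∑ i, z i) * (1 - ρ) ^ (N - ∑ i, z i) * kernelWeight d N p x y z := by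
  simp_rw [kernelQ_eq_sum_ite, mul_sum]
  rw [sum_comm]
  refine sum_congr rfl fun z hz => ?_
  have hs : ∑ i, z i ≤ N :=
    (sum_le_sum fun i _ => (mem_Iic.1 hz).trans inf_le_left i).trans hx
  rw [← sum_range_ite_pow_mul_choose_sub ρ hs, sum_mul]
  exact sum_congr rfl fun n _ => by split_ifs <;> ring

theorem cast_prod_factorial_eq_mul_of_le {z : Fin d → ℕ} (h : z ≤ x) :
    ∏ i, ((x i).factorial : ℝ)
      = (∏ i, ((x i).descFactorial (z i) : ℝ)) * ∏ i, ((x i - z i).factorial : ℝ) := by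
  exact_mod_cast prod_factorial_eq_prod_descFactorial_mul_prod_factorial_sub univ fun i _ => h i

theorem mProb_mul_mProb_mul_kernelWeight (hp : ∀ i, p i ≠ 0) {z : Fin d → ℕ} (hzx : z ≤ x)
    (hzy : z ≤ y) (hs : ∑ i, z i ≤ N) :
    mProb d N p x * mProb d N p y * kernelWeight d N p x y z
      = (N.factorial : ℝ) / ((∏ i, ((z i).factorial : ℝ)) * ((N - ∑ i, z i).factorial : ℝ)) *
          (∏ i, p i ^ z i) *
          (((N - ∑ i, z i).factorial : ℝ) / ∏ i, ((x i - z i).factorial : ℝ)) *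
          (∏ i, p i ^ (x i - z i)) *
          (((N - ∑ i, z i).factorial : ℝ) / ∏ i, ((y i - z i).factorial : ℝ)) *
          (∏ i, p i ^ (y i - z i)) := by
  have hdesc {a b : ℕ} (h : b ≤ a) : (a.descFactorial b : ℝ) ≠ 0 :=
    Nat.cast_ne_zero.2 (Nat.descFactorial_pos.2 h).ne'
  have hpz : ∏ i, p i ^ z i ≠ 0 := prod_ne_zero_iff.2 fun i _ => pow_ne_zero _ (hp i)
  have hdx : ∏ i, ((x i).descFactorial (z i) : ℝ) ≠ 0 :=
    prod_ne_zero_iff.2 fun i _ => hdesc (hzx i)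
  have hdy : ∏ i, ((y i).descFactorial (z i) : ℝ) ≠ 0 :=
    prod_ne_zero_iff.2 fun i _ => hdesc (hzy i)
  have hdN := hdesc hs
  have hN : (N.factorial : ℝ) = (N - ∑ i, z i).factorial * N.descFactorial (∑ i, z i) := by
    exact_mod_cast (Nat.factorial_mul_descFactorial hs).symm
  have hchoose :
      (N.choose (∑ i, z i) : ℝ) = N.descFactorial (∑ i, z i) / (∑ i, z i).factorial := by
    rw [Nat.descFactorial_eq_factorial_mul_choose]; push_cast; field_simp
  rw [mProb, mProb, kernelWeight, cast_prod_factorial_eq_mul_of_le hzx,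
    cast_prod_factorial_eq_mul_of_le hzy,
    prod_pow_eq_prod_pow_mul_prod_pow_sub univ p fun i _ => hzx i,
    prod_pow_eq_prod_pow_mul_prod_pow_sub univ p fun i _ => hzy i, prod_div_distrib,
    prod_mul_distrib, hchoose, hN]
  field_simp

end Kernel

theorem poisson_kernel_multinomial_general (d : ℕ) (p : Fin d → ℝ)
    (hp : ∀ j, 0 < p j) (N : ℕ)
    (x y : Fin d → ℕ) (hx : ∑ i, x i = N) (ρ : ℝ) :
    mProb d N p x * mProb d N p y *
        (1 + ∑ n ∈ Finset.Icc 1 N, ρ ^ n * kernelQ d N p n x y)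
      = ∑ z ∈ Finset.Iic (x ⊓ y),
          ρ ^ (∑ i, z i) * (1 - ρ) ^ (N - ∑ i, z i) *
          ((N.factorial : ℝ) /
            ((∏ i, ((z i).factorial : ℝ)) * ((N - ∑ i, z i).factorial : ℝ))) *
          (∏ i, (p i) ^ (z i)) *
          (((N - ∑ i, z i).factorial : ℝ) / ∏ i, ((x i - z i).factorial : ℝ)) *
          (∏ i, (p i) ^ (x i - z i)) *
          (((N - ∑ i, z i).factorial : ℝ) / ∏ i, ((y i - z i).factorial : ℝ)) *
          (∏ i, (p i) ^ (y i - z i)) := by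
  have h_range : 1 + ∑ n ∈ Icc 1 N, ρ ^ n * kernelQ d N p n x y
      = ∑ n ∈ range (N + 1), ρ ^ n * kernelQ d N p n x y := by
    rw [Nat.range_succ_eq_Icc_zero, ← add_sum_Ioc_eq_sum_Icc (Nat.zero_le N),
      ← Icc_add_one_left_eq_Ioc, zero_add, kernelQ_zero, pow_zero, mul_one]
  rw [h_range, sum_range_pow_mul_kernelQ hx.le, mul_sum]
  refine sum_congr rfl fun z hz => ?_
  have hzx : z ≤ x := (mem_Iic.1 hz).trans inf_le_left
  have hzy : z ≤ y := (mem_Iic.1 hz).trans inf_le_right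
  have hs : ∑ i, z i ≤ N := hx ▸ sum_le_sum fun i _ => hzx i
  rw [mul_left_comm, mProb_mul_mProb_mul_kernelWeight (fun i => (hp i).ne') hzx hzy hs]
  ring

/-- The Poisson kernel identity for the reproducing kernel polynomials on the multinomial. -/
theorem poisson_kernel_multinomial (d : ℕ) (hd : 2 ≤ d) (p : Fin d → ℝ)
    (hp : ∀ j, 0 < p j) (hsum : ∑ j, p j = 1) (N : ℕ) (hN : 0 < N)
    (x y : Fin d → ℕ) (hx : ∑ i, x i = N) (hy : ∑ i, y i = N) (ρ : ℝ) :
    mProb d N p x * mProb d N p y *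
        (1 + ∑ n ∈ Finset.Icc 1 N, ρ ^ n * kernelQ d N p n x y)
      = ∑ z ∈ Finset.Iic (x ⊓ y),
          ρ ^ (∑ i, z i) * (1 - ρ) ^ (N - ∑ i, z i) *
          ((N.factorial : ℝ) /
            ((∏ i, ((z i).factorial : ℝ)) * ((N - ∑ i, z i).factorial : ℝ))) *
          (∏ i, (p i) ^ (z i)) *
          (((N - ∑ i, z i).factorial : ℝ) / ∏ i, ((x i - z i).factorial : ℝ)) *
          (∏ i, (p i) ^ (x i - z i)) *
          (((N - ∑ i, z i).factorial : ℝ) / ∏ i, ((y i - z i).factorial : ℝ)) *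
          (∏ i, (p i) ^ (y i - z i)) :=
  poisson_kernel_multinomial_general d p hp N x y hx ρ
end

section
/- For all s, t ∈ ℝ^d and every integer 0 ≤ n ≤ N, Σ_{x,y∈ℕ^d: |x|=|y|=N} m(x;N,p) m(y;N,p) (∏_{i=1}^d s_i^{x_i}) (∏_{j=1}^d t_j^{y_j}) Q_n(x,y;N,p) = C(N,n) (T_0(s) T_0(t))^{N−n} (Σ_{j=1}^d p_j s_j t_j − T_0(s) T_0(t))^n, where T_0(s) = Σ_{i=1}^d p_i s_i and T_0(t) = Σ_{i=1}^d p_i t_i. -/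
open Finset

/-- The finite set of configurations of `N` balls in `d` boxes. -/
noncomputable def multiSupp (d N : ℕ) : Finset (Fin d → ℕ) :=
  (Finset.Iic (fun _ => N)).filter (fun x => ∑ i, x i = N)

/-!
Expanding `Q_n` as a sum over `z` and summing against the two independent multinomial weights,
each `z`-term factorises into two factorial-moment generating functions,
`E[∏ s_i^{X_i} (X_i)_{[z_i]}] = N_{[|z|]} ∏ (p_i s_i)^{z_i} T₀(s)^{N-|z|}`,
computed by the shift `x ↦ x - z` (terms with `z ≰ x` vanish). The factor `N_{[|z|]}²` cancels
the denominator of `Q_n`, the sum over `|z| = k` is the multinomial expansion of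
`(∑ p_j s_j t_j)^k`, and the remaining sum over `k` is the binomial expansion of
`(∑ p_j s_j t_j - T₀(s) T₀(t))^n` after `C(N,k) C(N-k,n-k) = C(N,n) C(n,k)`.
-/

open Nat

section piAntidiag

variable {ι : Type*} [Fintype ι] [DecidableEq ι]

theorem sum_pow_eq_sum_piAntidiag_factorial_div {K : Type*} [Field K] [CharZero K]
    (f : ι → K) (M : ℕ) :
    (∑ i, f i) ^ M =
      ∑ x ∈ piAntidiag univ M, ((M ! : K) / ∏ i, ((x i)! : K)) * ∏ i, f i ^ x i := by
  rw [sum_pow_eq_sum_piAntidiag]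
  refine sum_congr rfl fun x hx => ?_
  have hspec := Nat.multinomial_spec univ x
  rw [(mem_piAntidiag.mp hx).1] at hspec
  congr 1
  have hfac : ∏ i, ((x i)! : K) ≠ 0 :=
    prod_ne_zero_iff.mpr fun i _ => Nat.cast_ne_zero.mpr (x i).factorial_ne_zero
  rw [eq_div_iff hfac, ← hspec]
  push_cast
  ring

theorem sum_piAntidiag_eq_sum_piAntidiag_add {M : Type*} [AddCommMonoid M] {N : ℕ}
    {z : ι → ℕ} (hz : ∑ i, z i ≤ N) {f : (ι → ℕ) → M} (hf : ∀ x, ¬ z ≤ x → f x = 0) :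
    ∑ x ∈ piAntidiag univ N, f x = ∑ w ∈ piAntidiag univ (N - ∑ i, z i), f (w + z) := by
  refine (sum_of_injOn (· + z) (fun _ _ _ _ => add_right_cancel) ?_ ?_ fun _ _ => rfl).symm
  · intro w hw
    simp only [mem_coe, mem_piAntidiag, mem_univ, implies_true, and_true] at hw ⊢
    rw [Pi.add_def, sum_add_distrib, hw]
    omega
  · intro x hx hx_not_image
    refine hf x fun hzx => hx_not_image ⟨x - z, ?_, tsub_add_cancel_of_le hzx⟩
    simp only [mem_coe, mem_piAntidiag, mem_univ, implies_true, and_true] at hx ⊢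
    rw [Pi.sub_def, sum_tsub_distrib _ fun i _ => hzx i, hx]

end piAntidiag

theorem multiSupp_eq_piAntidiag (d N : ℕ) : multiSupp d N = piAntidiag univ N := by
  ext x
  simp only [multiSupp, mem_filter, mem_Iic, mem_piAntidiag, mem_univ, implies_true, and_true,
    and_iff_right_iff_imp]
  intro hx i
  exact hx ▸ single_le_sum (fun j _ => Nat.zero_le (x j)) (mem_univ i)

theorem mem_multiSupp {d N : ℕ} {x : Fin d → ℕ} : x ∈ multiSupp d N ↔ ∑ i, x i = N := by
  simp [multiSupp_eq_piAntidiag]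

theorem sum_range_choose_mul_choose_mul_neg_one_pow {R : Type*} [CommRing R] {n N : ℕ}
    (hn : n ≤ N) (a b : R) :
    ∑ k ∈ range (n + 1), (N.choose k * (N - k).choose (n - k) * (-1) ^ (n - k) : R) *
        a ^ (N - k) * b ^ k =
      N.choose n * a ^ (N - n) * (b - a) ^ n := by
  rw [sub_eq_add_neg, add_pow, mul_sum]
  refine sum_congr rfl fun k hk => ?_
  have hkn : k ≤ n := Nat.lt_succ_iff.mp (mem_range.mp hk)
  have hchoose : (N.choose n * n.choose k : R) = N.choose k * (N - k).choose (n - k) := by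
    exact_mod_cast congrArg Nat.cast (Nat.choose_mul (n := N) hkn)
  have hpow : a ^ (N - k) = a ^ (N - n) * a ^ (n - k) := by
    rw [← pow_add]; congr 1; omega
  rw [hpow, neg_pow, ← hchoose]
  ring

section Multinomial

variable {d N : ℕ}

theorem mProb_mul_prod_pow (p s : Fin d → ℝ) (x : Fin d → ℕ) :
    mProb d N p x * ∏ i, s i ^ x i =
      ((N ! : ℝ) / ∏ i, ((x i)! : ℝ)) * ∏ i, (p i * s i) ^ x i := by
  simp only [mProb, mul_pow, prod_mul_distrib]
  ring

theorem sum_mProb_mul_prod_pow (p s : Fin d → ℝ) :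
    ∑ x ∈ multiSupp d N, mProb d N p x * ∏ i, s i ^ x i = (∑ i, p i * s i) ^ N := by
  simp only [mProb_mul_prod_pow, multiSupp_eq_piAntidiag,
    ← sum_pow_eq_sum_piAntidiag_factorial_div]

theorem mProb_add_mul_prod_descFactorial (p : Fin d → ℝ) (w : Fin d → ℕ) {z : Fin d → ℕ}
    (hz : ∑ i, z i ≤ N) :
    mProb d N p (w + z) * ∏ i, ((w i + z i).descFactorial (z i) : ℝ) =
      N.descFactorial (∑ i, z i) * (∏ i, p i ^ z i) * mProb d (N - ∑ i, z i) p w := by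
  have hfac (i : Fin d) :
      ((w i + z i)! : ℝ) = (w i)! * (w i + z i).descFactorial (z i) := by
    have h := factorial_mul_descFactorial (Nat.le_add_left (z i) (w i))
    rw [Nat.add_sub_cancel] at h
    exact_mod_cast h.symm
  have hN : (N ! : ℝ) = (N - ∑ i, z i)! * N.descFactorial (∑ i, z i) := by
    exact_mod_cast (factorial_mul_descFactorial hz).symm
  have hdesc : ∏ i, ((w i + z i).descFactorial (z i) : ℝ) ≠ 0 :=
    prod_ne_zero_iff.mpr fun i _ => Nat.cast_ne_zero.mpr
      (descFactorial_eq_zero_iff_lt.not.mpr (by omega))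
  simp only [mProb, Pi.add_apply, hfac, hN, pow_add, prod_mul_distrib]
  field_simp

theorem sum_mProb_mul_prod_pow_mul_prod_descFactorial (p s : Fin d → ℝ) {z : Fin d → ℕ}
    (hz : ∑ i, z i ≤ N) :
    ∑ x ∈ multiSupp d N,
        mProb d N p x * (∏ i, s i ^ x i) * ∏ i, ((x i).descFactorial (z i) : ℝ) =
      N.descFactorial (∑ i, z i) * (∏ i, (p i * s i) ^ z i) *
        (∑ i, p i * s i) ^ (N - ∑ i, z i) := by
  have hvanish (x : Fin d → ℕ) (hzx : ¬ z ≤ x) :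
      mProb d N p x * (∏ i, s i ^ x i) * ∏ i, ((x i).descFactorial (z i) : ℝ) = 0 := by
    obtain ⟨i, hi⟩ := not_forall.mp (Pi.le_def.not.mp hzx)
    refine mul_eq_zero_of_right _ (prod_eq_zero (mem_univ i) ?_)
    exact_mod_cast descFactorial_eq_zero_iff_lt.mpr (not_le.mp hi)
  rw [multiSupp_eq_piAntidiag, sum_piAntidiag_eq_sum_piAntidiag_add hz hvanish,
    ← multiSupp_eq_piAntidiag, ← sum_mProb_mul_prod_pow, mul_sum]
  refine sum_congr rfl fun w _ => ?_
  simp only [Pi.add_apply, pow_add, mul_pow, prod_mul_distrib]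
  linear_combination
    (∏ i, s i ^ w i) * (∏ i, s i ^ z i) * mProb_add_mul_prod_descFactorial p w hz

theorem sum_sum_mProb_mul_prod_descFactorial_div (p s t : Fin d → ℝ) {z : Fin d → ℕ}
    (hz : ∑ i, z i ≤ N) :
    ∑ x ∈ multiSupp d N, ∑ y ∈ multiSupp d N,
        mProb d N p x * mProb d N p y * (∏ i, s i ^ x i) * (∏ j, t j ^ y j) *
          ∏ i, ((x i).descFactorial (z i) * (y i).descFactorial (z i) / p i ^ z i : ℝ) =
      N.descFactorial (∑ i, z i) ^ 2 * ((∑ i, p i * s i) * (∑ i, p i * t i)) ^ (N - ∑ i, z i) *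
        ∏ i, (p i * s i * t i) ^ z i := by
  have hpow : (∏ i, (p i * s i) ^ z i) * (∏ i, (p i * t i) ^ z i) / ∏ i, p i ^ z i =
      ∏ i, (p i * s i * t i) ^ z i := by
    rw [← prod_mul_distrib, ← prod_div_distrib]
    refine prod_congr rfl fun i _ => ?_
    rw [mul_pow, mul_pow, mul_pow, mul_pow]
    calc _ = p i ^ z i * p i ^ z i / p i ^ z i * (s i ^ z i * t i ^ z i) := by ring
      _ = _ := by rw [mul_self_div_self]; ring
  calc _ = (∑ x ∈ multiSupp d N,
          mProb d N p x * (∏ i, s i ^ x i) * ∏ i, ((x i).descFactorial (z i) : ℝ)) *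
        (∑ y ∈ multiSupp d N,
          mProb d N p y * (∏ i, t i ^ y i) * ∏ i, ((y i).descFactorial (z i) : ℝ)) /
        ∏ i, p i ^ z i := by
        rw [sum_mul_sum, sum_div]
        refine sum_congr rfl fun x _ => ?_
        rw [sum_div]
        refine sum_congr rfl fun y _ => ?_
        rw [prod_div_distrib, prod_mul_distrib]
        ring
    _ = _ := by
        rw [sum_mProb_mul_prod_pow_mul_prod_descFactorial p s hz,
          sum_mProb_mul_prod_pow_mul_prod_descFactorial p t hz, ← hpow]
        ring

end Multinomial

section Kernel

variable {d N : ℕ}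

theorem kernelQ_eq_sum_range (p : Fin d → ℝ) (n : ℕ) (x y : Fin d → ℕ) :
    kernelQ d N p n x y =
      ∑ k ∈ range (n + 1),
        (N.choose k * (N - k).choose (n - k) * (-1) ^ (n - k) / N.descFactorial k ^ 2 : ℝ) *
          ∑ z ∈ multiSupp d k, ((k ! : ℝ) / ∏ i, ((z i)! : ℝ)) *
            ∏ i, ((x i).descFactorial (z i) * (y i).descFactorial (z i) / p i ^ z i : ℝ) := by
  rw [kernelQ, ← sum_fiberwise_of_maps_to (s := (Iic (x ⊓ y)).filter fun z => ∑ i, z i ≤ n)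
    (g := fun z => ∑ i, z i) (t := range (n + 1))
    fun z hz => mem_range.mpr (Nat.lt_succ_of_le (mem_filter.mp hz).2)]
  refine sum_congr rfl fun k hk => ?_
  rw [mul_sum]
  refine sum_subset_zero_on_sdiff ?_ ?_ ?_
  · intro z hz
    exact mem_multiSupp.mpr (mem_filter.mp hz).2
  · intro z hz
    obtain ⟨hzk, hz_notin⟩ := mem_sdiff.mp hz
    rw [mem_multiSupp] at hzk
    have hzxy : ¬ z ≤ x ⊓ y := fun h => hz_notin <| mem_filter.mpr
      ⟨mem_filter.mpr ⟨mem_Iic.mpr h, hzk ▸ Nat.le_of_lt_succ (mem_range.mp hk)⟩, hzk⟩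
    obtain ⟨i, hi⟩ := not_forall.mp (Pi.le_def.not.mp hzxy)
    refine mul_eq_zero_of_right _ (mul_eq_zero_of_right _ (prod_eq_zero (mem_univ i) ?_))
    rcases inf_lt_iff.mp (not_le.mp hi : x i ⊓ y i < z i) with h | h <;>
      simp [descFactorial_eq_zero_iff_lt.mpr h]
  · intro z hz
    rw [(mem_filter.mp hz).2]
    ring

theorem sum_sum_mul_kernelQ (p : Fin d → ℝ) (n : ℕ) (X Y : Finset (Fin d → ℕ))
    (w : (Fin d → ℕ) → (Fin d → ℕ) → ℝ) :
    ∑ x ∈ X, ∑ y ∈ Y, w x y * kernelQ d N p n x y =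
      ∑ k ∈ range (n + 1),
        (N.choose k * (N - k).choose (n - k) * (-1) ^ (n - k) / N.descFactorial k ^ 2 : ℝ) *
          ∑ z ∈ multiSupp d k, ((k ! : ℝ) / ∏ i, ((z i)! : ℝ)) *
            ∑ x ∈ X, ∑ y ∈ Y, w x y *
              ∏ i, ((x i).descFactorial (z i) * (y i).descFactorial (z i) / p i ^ z i : ℝ) := by
  simp_rw [kernelQ_eq_sum_range, mul_sum]
  refine (sum_congr rfl fun x _ => sum_comm).trans ?_
  refine (sum_congr rfl fun x _ => sum_congr rfl fun k _ => sum_comm).trans ?_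
  refine sum_comm.trans (sum_congr rfl fun k _ => sum_comm.trans ?_)
  exact sum_congr rfl fun z _ => sum_congr rfl fun x _ => sum_congr rfl fun y _ => by ring

end Kernel

theorem kernelQ_transform_general (d : ℕ) (p : Fin d → ℝ) (N : ℕ) (s t : Fin d → ℝ) (n : ℕ)
    (hn : n ≤ N) :
    ∑ x ∈ multiSupp d N, ∑ y ∈ multiSupp d N,
        mProb d N p x * mProb d N p y * (∏ i, (s i) ^ (x i)) * (∏ j, (t j) ^ (y j)) *
          kernelQ d N p n x y
      = (N.choose n : ℝ) * ((∑ i, p i * s i) * (∑ i, p i * t i)) ^ (N - n) *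
          ((∑ j, p j * s j * t j) - (∑ i, p i * s i) * (∑ i, p i * t i)) ^ n := by
  rw [sum_sum_mul_kernelQ, ← sum_range_choose_mul_choose_mul_neg_one_pow hn]
  refine sum_congr rfl fun k hk => ?_
  have hkN : k ≤ N := (Nat.le_of_lt_succ (mem_range.mp hk)).trans hn
  have hD : (N.descFactorial k : ℝ) ≠ 0 :=
    Nat.cast_ne_zero.mpr (descFactorial_eq_zero_iff_lt.not.mpr (not_lt.mpr hkN))
  rw [sum_pow_eq_sum_piAntidiag_factorial_div (fun j => p j * s j * t j),
    ← multiSupp_eq_piAntidiag, mul_sum (multiSupp d k), mul_sum (multiSupp d k)]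
  refine sum_congr rfl fun z hz => ?_
  have hzk := mem_multiSupp.mp hz
  rw [sum_sum_mProb_mul_prod_descFactorial_div p s t (hzk ▸ hkN), hzk]
  field_simp

/-- The transform of `Q_n(x,y;N,p)` for independent multinomial vectors `X, Y`. -/
theorem kernelQ_transform (d : ℕ) (hd : 2 ≤ d) (p : Fin d → ℝ)
    (hp : ∀ j, 0 < p j) (hsum : ∑ j, p j = 1) (N : ℕ) (hN : 0 < N)
    (s t : Fin d → ℝ) (n : ℕ) (hn : n ≤ N) :
    ∑ x ∈ multiSupp d N, ∑ y ∈ multiSupp d N,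
        mProb d N p x * mProb d N p y * (∏ i, (s i) ^ (x i)) * (∏ j, (t j) ^ (y j)) *
          kernelQ d N p n x y
      = (N.choose n : ℝ) * ((∑ i, p i * s i) * (∑ i, p i * t i)) ^ (N - n) *
          ((∑ j, p j * s j * t j) - (∑ i, p i * s i) * (∑ i, p i * t i)) ^ n :=
  kernelQ_transform_general d p N s t n hn
end

section
/- For every j ∈ {1,…,d} and every integer 0 ≤ n ≤ N, Q_n(N e_j, N e_j; N, p) = C(N,n) (1/p_j − 1)^n, where N e_j ∈ ℕ^d is the vector whose j-th coordinate is N and whose other coordinates are 0. -/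
/-!
The only `z ≤ N e_j` are `z = k e_j` with `k ≤ N`. For these the falling factorials of the
numerator cancel against `(N_{[k]})²` and `|z|!/z!` is `1`, and `C(N,k) C(N-k,n-k) = C(N,n) C(n,k)`,
so `Q_n` is `C(N,n) ∑ₖ C(n,k) p_j^{-k} (-1)^{n-k}`, a binomial expansion of `(1/p_j - 1)^n`.
-/

open Finset

section
variable {ι : Type*} [DecidableEq ι]

theorem Pi.le_single_iff {j : ι} {N : ℕ} {z : ι → ℕ} :
    z ≤ Pi.single j N ↔ ∃ k ≤ N, Pi.single j k = z := by
  constructor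
  · intro hz
    refine ⟨z j, by simpa using hz j, funext fun i => ?_⟩
    by_cases hij : i = j
    · subst hij; simp
    · simpa [hij, eq_comm] using hz i
  · rintro ⟨k, hk, rfl⟩ i
    by_cases hij : i = j
    · subst hij; simpa using hk
    · simp [hij]

theorem filter_Iic_single_eq_image [Fintype ι] (j : ι) {n N : ℕ} (hn : n ≤ N) :
    (Iic (Pi.single j N : ι → ℕ)).filter (fun z => ∑ i, z i ≤ n)
      = (range (n + 1)).image (Pi.single j) := by
  ext z
  simp only [mem_filter, mem_Iic, Pi.le_single_iff, mem_image, mem_range, Nat.lt_succ_iff]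
  constructor
  · rintro ⟨⟨k, -, rfl⟩, hs⟩
    exact ⟨k, by simpa [sum_pi_single'] using hs, rfl⟩
  · rintro ⟨k, hk, rfl⟩
    exact ⟨⟨k, hk.trans hn, rfl⟩, by simpa [sum_pi_single'] using hk⟩

end

noncomputable def kernelQTerm {d : ℕ} (N : ℕ) (p : Fin d → ℝ) (n : ℕ) (x y z : Fin d → ℕ) : ℝ :=
  (N.choose (∑ i, z i) : ℝ) * ((N - ∑ i, z i).choose (n - ∑ i, z i) : ℝ) *
    (-1 : ℝ) ^ (n - ∑ i, z i) *
    (((∑ i, z i).factorial : ℝ) / ∏ i, ((z i).factorial : ℝ)) *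
    (∏ i, ((x i).descFactorial (z i) : ℝ) * ((y i).descFactorial (z i) : ℝ) / (p i) ^ (z i)) /
    ((N.descFactorial (∑ i, z i) : ℝ)) ^ 2

theorem kernelQ_eq_sum_kernelQTerm (d N : ℕ) (p : Fin d → ℝ) (n : ℕ) (x y : Fin d → ℕ) :
    kernelQ d N p n x y
      = ∑ z ∈ (Iic (x ⊓ y)).filter (fun z => ∑ i, z i ≤ n), kernelQTerm N p n x y z :=
  rfl

theorem kernelQTerm_single {d N n k : ℕ} (p : Fin d → ℝ) (j : Fin d) (hk : k ≤ n) (hn : n ≤ N) :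
    kernelQTerm N p n (Pi.single j N) (Pi.single j N) (Pi.single j k)
      = N.choose n * ((1 / p j) ^ k * (-1) ^ (n - k) * n.choose k) := by
  have hfact : ∏ i, (((Pi.single j k : Fin d → ℕ) i).factorial : ℝ) = k.factorial :=
    (Fintype.prod_eq_single j fun i hi => by simp [hi]).trans (by simp)
  have hdesc : ∏ i, (((Pi.single j N : Fin d → ℕ) i).descFactorial ((Pi.single j k : Fin d → ℕ) i) : ℝ)
        * (((Pi.single j N : Fin d → ℕ) i).descFactorial ((Pi.single j k : Fin d → ℕ) i) : ℝ)
        / p i ^ (Pi.single j k : Fin d → ℕ) i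
      = (N.descFactorial k : ℝ) ^ 2 * (1 / p j) ^ k :=
    (Fintype.prod_eq_single j fun i hi => by simp [hi]).trans (by simp [sq, div_eq_mul_inv])
  have hchoose : (N.choose k * (N - k).choose (n - k) : ℝ) = N.choose n * n.choose k := by
    exact_mod_cast (Nat.choose_mul hk).symm
  have hD : (N.descFactorial k : ℝ) ≠ 0 := by
    exact_mod_cast Nat.descFactorial_eq_zero_iff_lt.not.mpr (by omega)
  simp only [kernelQTerm, sum_pi_single', mem_univ, if_true, hfact, hdesc]
  rw [div_self (Nat.cast_ne_zero.mpr k.factorial_ne_zero), mul_one, mul_div_assoc,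
    mul_div_cancel_left₀ _ (pow_ne_zero 2 hD)]
  linear_combination (-1) ^ (n - k) * (1 / p j) ^ k * hchoose

theorem kernelQ_at_corner_general (d : ℕ) (p : Fin d → ℝ) (N : ℕ)
    (j : Fin d) (n : ℕ) (hn : n ≤ N) :
    kernelQ d N p n (Pi.single j N) (Pi.single j N)
      = (N.choose n : ℝ) * (1 / p j - 1) ^ n := by
  rw [kernelQ_eq_sum_kernelQTerm, inf_idem, filter_Iic_single_eq_image j hn,
    sum_image (Pi.single_injective j).injOn, sub_eq_add_neg, add_pow, mul_sum]
  exact sum_congr rfl fun k hk => kernelQTerm_single p j (Nat.lt_succ_iff.mp (mem_range.mp hk)) hn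

/-- Value of the reproducing kernel polynomial at `x = y = N e_j`:
`Q_n(N e_j, N e_j; N, p) = C(N,n) (1/p_j - 1)^n`. -/
theorem kernelQ_at_corner (d : ℕ) (hd : 2 ≤ d) (p : Fin d → ℝ)
    (hp : ∀ j, 0 < p j) (hsum : ∑ j, p j = 1) (N : ℕ) (hN : 0 < N)
    (j : Fin d) (n : ℕ) (hn : n ≤ N) :
    kernelQ d N p n (Pi.single j N) (Pi.single j N)
      = (N.choose n : ℝ) * (1 / p j - 1) ^ n :=
  kernelQ_at_corner_general d p N j n hn
end

section
/- For all x, y ∈ ℕ^d with |x| = |y| = N: Σ_{n=0}^N Q_n(x,y;N,p) = 0 if x ≠ y, and Σ_{n=0}^N Q_n(x,x;N,p) = 1/m(x;N,p); equivalently, m(y;N,p) Σ_{n=0}^N Q_n(x,y;N,p) equals the indicator that x = y. -/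
open Finset

/-!
Exchange the sums over `n` and `z`. For fixed `z` the `n`-dependent factor of the term of
`Q_n` is `(-1)^(n-|z|) C(N-|z|, n-|z|)`, whose sum over `|z| ≤ n ≤ N` is `(1-1)^(N-|z|)`, so
only the `z` with `|z| = N` survive. Since `z ≤ x ⊓ y` and `|x| = |y| = N`, this forces
`z = x = y`, and for `z = x = y` the coefficient is `∏ xᵢ! / (N! ∏ pᵢ^xᵢ) = 1 / m(x;N,p)`.
-/

theorem alternating_sum_range_choose_cast {R : Type*} [Ring R] (M : ℕ) :
    ∑ k ∈ range (M + 1), ((-1 : R) ^ k * M.choose k) = if M = 0 then 1 else 0 := by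
  have h := congrArg (Int.cast : ℤ → R) (Int.alternating_sum_range_choose (n := M))
  push_cast [apply_ite (Int.cast : ℤ → R)] at h
  exact h

theorem sum_range_shifted_alternating_choose_mul {R : Type*} [Ring R] {s N : ℕ} (hs : s ≤ N)
    (c : R) :
    ∑ n ∈ range (N + 1), (if s ≤ n then (-1 : R) ^ (n - s) * (N - s).choose (n - s) * c else 0)
      = if s = N then c else 0 := by
  obtain ⟨M, rfl⟩ := Nat.exists_eq_add_of_le hs
  rw [show s + M + 1 = s + (M + 1) by omega, sum_range_add,
    sum_eq_zero fun n hn => if_neg (by simpa using hn), zero_add]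
  simp only [le_add_iff_nonneg_right, zero_le, if_true, Nat.add_sub_cancel_left]
  rw [← sum_mul, alternating_sum_range_choose_cast]
  simp

theorem eq_of_le_of_sum_eq {ι : Type*} [Fintype ι] {z x : ι → ℕ} (h : z ≤ x)
    (hs : ∑ i, z i = ∑ i, x i) : z = x :=
  funext fun i => (sum_eq_sum_iff_of_le fun i _ => h i).mp hs i (mem_univ i)

/-- The `n`-independent factor of the term of `Q_n(x,y;N,p)` indexed by `z`. -/
noncomputable def kernelQCoeff (d N : ℕ) (p : Fin d → ℝ) (x y z : Fin d → ℕ) : ℝ :=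
  (N.choose (∑ i, z i) : ℝ) * (((∑ i, z i).factorial : ℝ) / ∏ i, ((z i).factorial : ℝ)) *
    (∏ i, ((x i).descFactorial (z i) : ℝ) * ((y i).descFactorial (z i) : ℝ) / (p i) ^ (z i)) /
    ((N.descFactorial (∑ i, z i) : ℝ)) ^ 2

variable {d N : ℕ} {p : Fin d → ℝ} {x y : Fin d → ℕ}

theorem kernelQ_eq_sum_Iic (n : ℕ) :
    kernelQ d N p n x y = ∑ z ∈ Iic (x ⊓ y), if ∑ i, z i ≤ n then
      (-1 : ℝ) ^ (n - ∑ i, z i) * (N - ∑ i, z i).choose (n - ∑ i, z i) *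
        kernelQCoeff d N p x y z else 0 := by
  rw [kernelQ, sum_filter]
  refine sum_congr rfl fun z _ => ?_
  split_ifs
  · rw [kernelQCoeff]; ring
  · rfl

theorem sum_range_kernelQ (hx : ∑ i, x i = N) :
    ∑ n ∈ range (N + 1), kernelQ d N p n x y
      = ∑ z ∈ (Iic (x ⊓ y)).filter (fun z => ∑ i, z i = N), kernelQCoeff d N p x y z := by
  simp_rw [kernelQ_eq_sum_Iic]
  rw [sum_comm, sum_filter]
  refine sum_congr rfl fun z hz => ?_
  have hzN : ∑ i, z i ≤ N :=
    hx ▸ sum_le_sum fun i _ => (mem_Iic.mp hz i).trans inf_le_left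
  exact sum_range_shifted_alternating_choose_mul hzN _

theorem le_inf_and_sum_eq_iff (hx : ∑ i, x i = N) (hy : ∑ i, y i = N) (z : Fin d → ℕ) :
    (z ≤ x ⊓ y ∧ ∑ i, z i = N) ↔ z = x ∧ x = y := by
  constructor
  · rintro ⟨hz, hzN⟩
    have hzx := eq_of_le_of_sum_eq (hz.trans inf_le_left) (hzN.trans hx.symm)
    have hzy := eq_of_le_of_sum_eq (hz.trans inf_le_right) (hzN.trans hy.symm)
    exact ⟨hzx, hzx.symm.trans hzy⟩
  · rintro ⟨rfl, rfl⟩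
    exact ⟨by rw [inf_idem], hx⟩

theorem filter_Iic_inf_sum_eq (hx : ∑ i, x i = N) (hy : ∑ i, y i = N) :
    (Iic (x ⊓ y)).filter (fun z => ∑ i, z i = N) = if x = y then {x} else ∅ := by
  ext z
  rw [mem_filter, mem_Iic, le_inf_and_sum_eq_iff hx hy]
  split_ifs with hxy <;> simp [hxy]

theorem kernelQCoeff_self (hx : ∑ i, x i = N) :
    kernelQCoeff d N p x x x = 1 / mProb d N p x := by
  simp_rw [kernelQCoeff, mProb, hx, Nat.choose_self, Nat.cast_one, Nat.descFactorial_self,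
    prod_div_distrib, prod_mul_distrib]
  field_simp

theorem mProb_ne_zero (hp : ∀ i, p i ≠ 0) (x : Fin d → ℕ) : mProb d N p x ≠ 0 := by
  rw [mProb]
  exact mul_ne_zero (by positivity) (prod_ne_zero_iff.mpr fun i _ => pow_ne_zero _ (hp i))

theorem sum_range_kernelQ_eq (hx : ∑ i, x i = N) (hy : ∑ i, y i = N) :
    ∑ n ∈ range (N + 1), kernelQ d N p n x y = if x = y then 1 / mProb d N p x else 0 := by
  rw [sum_range_kernelQ hx, filter_Iic_inf_sum_eq hx hy]
  split_ifs with hxy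
  · subst hxy
    rw [sum_singleton, kernelQCoeff_self hx]
  · exact sum_empty

theorem kernelQ_sum_diagonal_general (d : ℕ) (p : Fin d → ℝ)
    (hp : ∀ j, 0 < p j) (N : ℕ)
    (x y : Fin d → ℕ) (hx : ∑ i, x i = N) (hy : ∑ i, y i = N) :
    (x ≠ y → ∑ n ∈ Finset.range (N + 1), kernelQ d N p n x y = 0) ∧
    (∑ n ∈ Finset.range (N + 1), kernelQ d N p n x x = 1 / mProb d N p x) ∧
    (mProb d N p y * ∑ n ∈ Finset.range (N + 1), kernelQ d N p n x y
      = if x = y then 1 else 0) := by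
  refine ⟨fun hxy => by rw [sum_range_kernelQ_eq hx hy, if_neg hxy],
    by rw [sum_range_kernelQ_eq hx hx, if_pos rfl], ?_⟩
  rw [sum_range_kernelQ_eq hx hy]
  split_ifs with hxy
  · subst hxy
    exact mul_one_div_cancel (mProb_ne_zero (fun j => (hp j).ne') x)
  · exact mul_zero _

/-- The full kernel `Σ_{n=0}^N Q_n(x,y;N,p)` is concentrated on the diagonal:
it vanishes off the diagonal, equals `1/m(x;N,p)` on the diagonal, and equivalently
`m(y;N,p) Σ_{n=0}^N Q_n(x,y;N,p)` is the indicator that `x = y`. -/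
theorem kernelQ_sum_diagonal (d : ℕ) (hd : 2 ≤ d) (p : Fin d → ℝ)
    (hp : ∀ j, 0 < p j) (hsum : ∑ j, p j = 1) (N : ℕ) (hN : 0 < N)
    (x y : Fin d → ℕ) (hx : ∑ i, x i = N) (hy : ∑ i, y i = N) :
    (x ≠ y → ∑ n ∈ Finset.range (N + 1), kernelQ d N p n x y = 0) ∧
    (∑ n ∈ Finset.range (N + 1), kernelQ d N p n x x = 1 / mProb d N p x) ∧
    (mProb d N p y * ∑ n ∈ Finset.range (N + 1), kernelQ d N p n x y
      = if x = y then 1 else 0) :=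
  kernelQ_sum_diagonal_general d p hp N x y hx hy
end

section
/- Let N be a positive integer and r, s ∈ (0,1). Then Σ_{n=0}^N C(N,n) (s/(1−s))^n Q_n(x;N,s) Q_n(y;N,s) Q_n(z;N,r) ≥ 0 for all x, y, z ∈ {0,1,…,N} if and only if 1−r ≤ min(s, 1−s). -/
/-!
Work with subsets of an `N`-element set and put `t = s/(1-s)`, `a = -(1-s)/s`,
`b = -(1-r)/r`. For `#A = n`, summing `a ^ #(A ∩ ω)` over the `x`-subsets `ω` gives
`C(N,x) Q_n(x;N,s)`: counting the `ω` by `#(A ∩ ω)` and applying the duality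
`C(N,n) C(n,ν) C(N-n,x-ν) = C(N,x) C(x,ν) C(N-x,n-ν)` recovers the defining sum of `Q_n`.
Expanding `∏ i (1 + t α_i β_i γ_i)` over subsets `A`, where `α, β, γ` equal `a, a, b` on
`x`-, `y`-, `z`-subsets `ω, ω', Z` and `1` off them, therefore shows that
`C(N,x) C(N,y) C(N,z)` times the triple sum is `∑_{ω, ω', Z} ∏ i (1 + t α_i β_i γ_i)`.

Every factor is one of the eight numbers `1 + t a^e a^f b^g` with `e, f, g ∈ {0, 1}`.
Since `t a = -1`, the only ones that can be negative are `1 + t a² b = (r+s-1)/(rs)` and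
`1 + t b = (r-s)/(r(1-s))`, so the condition `1 - r ≤ min s (1-s)` makes every term
nonnegative. Conversely, at `(N, N, 1)` and `(0, 0, 1)` the subset sum collapses to
`N (1 + t a² b)(1 + t a²)^(N-1)` and `N (1 + t b)(1 + t)^(N-1)`, and nonnegativity of these
forces the condition.
-/

open Finset

/-- Univariate Krawtchouk polynomial `Q_n(x;N,s)`, normalized so `Q_n(0;N,s) = 1`. -/
noncomputable def kraw (N n x : ℕ) (s : ℝ) : ℝ :=
  ∑ ν ∈ Finset.range (n + 1),
    (-(1 - s) / s) ^ ν * (x.choose ν : ℝ) * ((N - x).choose (n - ν) : ℝ) / (N.choose n : ℝ)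

theorem Nat.choose_mul_choose_sub_comm (M a b : ℕ) :
    M.choose a * (M - a).choose b = M.choose b * (M - b).choose a := by
  by_cases h : a + b ≤ M
  · have ha := Nat.choose_mul (n := M) (Nat.le_add_right a b)
    have hb := Nat.choose_mul (n := M) (Nat.le_add_left b a)
    rw [Nat.add_sub_cancel_left] at ha
    rw [Nat.add_sub_cancel] at hb
    rw [← ha, ← hb, Nat.choose_symm_add]
  · have hzero : ∀ c d, M < c + d → M.choose c * (M - c).choose d = 0 := fun c d hcd =>
      Nat.mul_eq_zero.2 (by rw [Nat.choose_eq_zero_iff, Nat.choose_eq_zero_iff]; omega)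
    rw [hzero a b (by omega), hzero b a (by omega)]

theorem Nat.choose_mul_choose_mul_choose_sub_comm {N n k ν : ℕ} (hνn : ν ≤ n)
    (hνk : ν ≤ k) :
    N.choose n * (n.choose ν * (N - n).choose (k - ν))
      = N.choose k * (k.choose ν * (N - k).choose (n - ν)) := by
  have hM := Nat.choose_mul_choose_sub_comm (N - ν) (n - ν) (k - ν)
  rw [show N - ν - (n - ν) = N - n by omega, show N - ν - (k - ν) = N - k by omega] at hM
  rw [← mul_assoc, ← mul_assoc, Nat.choose_mul hνn, Nat.choose_mul hνk, mul_assoc, mul_assoc,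
    hM]

theorem Finset.sum_mul_sum_mul_sum {ι κ μ R : Type*} [NonUnitalNonAssocSemiring R]
    (s : Finset ι) (t : Finset κ) (u : Finset μ) (f : ι → R) (g : κ → R) (h : μ → R) :
    (∑ i ∈ s, f i) * (∑ j ∈ t, g j) * (∑ k ∈ u, h k)
      = ∑ i ∈ s, ∑ j ∈ t, ∑ k ∈ u, f i * g j * h k := by
  rw [sum_mul_sum]
  simp only [sum_mul]
  simp only [mul_sum]

theorem choose_mul_kraw {N n : ℕ} (hn : n ≤ N) (k : ℕ) (s : ℝ) :
    (N.choose n : ℝ) * kraw N n k s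
      = ∑ ν ∈ range (n + 1), k.choose ν * (N - k).choose (n - ν) * (-(1 - s) / s) ^ ν := by
  have hC : (N.choose n : ℝ) ≠ 0 := Nat.cast_ne_zero.mpr (Nat.choose_pos hn).ne'
  rw [kraw, mul_sum]
  refine sum_congr rfl fun ν _ => ?_
  field_simp

section Subsets

variable {α : Type*} [Fintype α] [DecidableEq α]

theorem Finset.sum_powersetCard_one_prod_ite {R : Type*} [CommSemiring R] (u v : R) :
    ∑ Z ∈ (univ : Finset α).powersetCard 1, ∏ i, (if i ∈ Z then u else v)
      = Fintype.card α * (u * v ^ (Fintype.card α - 1)) := by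
  rw [powersetCard_one, sum_map]
  simp only [Function.Embedding.coeFn_mk, mem_singleton]
  rw [sum_congr rfl fun j _ => (Fintype.prod_eq_mul_prod_compl j _).trans ?_, sum_const,
    card_univ, nsmul_eq_mul]
  rw [if_pos rfl, prod_congr rfl fun i hi => if_neg (mem_compl.mp hi ∘ mem_singleton.mpr),
    prod_const, card_compl, card_singleton]

theorem card_filter_card_inter_powersetCard (A : Finset α) {k ν : ℕ} (hνk : ν ≤ k) :
    #{ω ∈ (univ : Finset α).powersetCard k | #(A ∩ ω) = ν}
      = (#A).choose ν * (Fintype.card α - #A).choose (k - ν) := by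
  rw [← card_compl, ← card_powersetCard, ← card_powersetCard, ← card_product]
  refine card_bij' (fun ω _ => (A ∩ ω, ω \ A)) (fun p _ => p.1 ∪ p.2) ?_ ?_ ?_ ?_
  · intro ω hω
    simp only [mem_filter, mem_powersetCard, mem_product, subset_univ, true_and] at hω ⊢
    refine ⟨⟨inter_subset_left, hω.2⟩, fun i => by simp +contextual, ?_⟩
    rw [card_sdiff, hω.1, hω.2]
  · rintro ⟨B, C⟩ hBC
    simp only [mem_powersetCard, mem_product] at hBC
    obtain ⟨⟨hBA, hB⟩, hCA, hC⟩ := hBC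
    have hAC : Disjoint A C := subset_compl_iff_disjoint_left.mp hCA
    have hinter : A ∩ (B ∪ C) = B := by
      rw [inter_union_distrib_left, disjoint_iff_inter_eq_empty.mp hAC, union_empty,
        inter_eq_right.mpr hBA]
    simp only [mem_filter, mem_powersetCard, subset_univ, true_and, hinter, hB, and_true]
    rw [card_union_of_disjoint (hAC.mono_left hBA), hB, hC]
    omega
  · intro ω _
    rw [union_comm, inter_comm]
    exact sdiff_union_inter ω A
  · rintro ⟨B, C⟩ hBC
    simp only [mem_powersetCard, mem_product] at hBC
    obtain ⟨⟨hBA, -⟩, hCA, -⟩ := hBC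
    have hAC : Disjoint A C := subset_compl_iff_disjoint_left.mp hCA
    dsimp only
    rw [inter_union_distrib_left, disjoint_iff_inter_eq_empty.mp hAC, union_empty,
      inter_eq_right.mpr hBA, union_sdiff_distrib, sdiff_eq_empty_iff_subset.mpr hBA,
      sdiff_eq_self_of_disjoint hAC.symm, empty_union]

theorem choose_card_mul_sum_powersetCard_pow_card_inter {R : Type*} [CommSemiring R]
    (A : Finset α) (k : ℕ) (a : R) :
    ((Fintype.card α).choose #A : R) *
        ∑ ω ∈ (univ : Finset α).powersetCard k, a ^ #(A ∩ ω)
      = (Fintype.card α).choose k *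
          ∑ ν ∈ range (#A + 1),
            k.choose ν * (Fintype.card α - k).choose (#A - ν) * a ^ ν := by
  have hmaps : ∀ ω ∈ (univ : Finset α).powersetCard k, #(A ∩ ω) ∈ range (#A + 1) :=
    fun ω _ => mem_range_succ_iff.mpr (card_le_card inter_subset_left)
  rw [← sum_fiberwise_of_maps_to hmaps, mul_sum, mul_sum]
  refine sum_congr rfl fun ν hν => ?_
  rw [sum_congr rfl fun ω hω => by rw [(mem_filter.mp hω).2], sum_const, nsmul_eq_mul]
  by_cases hνk : ν ≤ k
  · rw [card_filter_card_inter_powersetCard A hνk, ← mul_assoc, ← mul_assoc]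
    congr 1
    have h := congrArg (Nat.cast : ℕ → R) <| Nat.choose_mul_choose_mul_choose_sub_comm
      (N := Fintype.card α) (mem_range_succ_iff.mp hν) hνk
    push_cast at h ⊢
    exact h
  · have hempty : {ω ∈ (univ : Finset α).powersetCard k | #(A ∩ ω) = ν} = ∅ :=
      filter_false_of_mem fun ω hω h =>
        hνk (h ▸ (mem_powersetCard.mp hω).2 ▸ card_le_card inter_subset_right)
    simp [hempty, Nat.choose_eq_zero_of_lt (not_le.mp hνk)]

theorem sum_powersetCard_pow_card_inter_eq_kraw (A : Finset α) (k : ℕ) (s : ℝ) :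
    ∑ ω ∈ (univ : Finset α).powersetCard k, (-(1 - s) / s) ^ #(A ∩ ω)
      = (Fintype.card α).choose k * kraw (Fintype.card α) #A k s := by
  have hA : #A ≤ Fintype.card α := card_le_univ A
  have hC : ((Fintype.card α).choose #A : ℝ) ≠ 0 :=
    Nat.cast_ne_zero.mpr (Nat.choose_pos hA).ne'
  apply mul_left_cancel₀ hC
  rw [choose_card_mul_sum_powersetCard_pow_card_inter, mul_left_comm, choose_mul_kraw hA]

/-- `1 + t α_i β_i γ_i` for a coordinate `i`, where `p, q, u` stand for
`i ∈ ω`, `i ∈ ω'`, `i ∈ Z`. -/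
noncomputable def krawFactor (r s : ℝ) (p q u : Prop) [Decidable p] [Decidable q] [Decidable u] :
    ℝ :=
  1 + s / (1 - s) * (if p then -(1 - s) / s else 1) * (if q then -(1 - s) / s else 1) *
    (if u then -(1 - r) / r else 1)

noncomputable def krawTripleSum (N x y z : ℕ) (r s : ℝ) : ℝ :=
  ∑ n ∈ range (N + 1),
    (N.choose n : ℝ) * (s / (1 - s)) ^ n * kraw N n x s * kraw N n y s * kraw N n z r

theorem prod_krawFactor_eq_sum_powerset (r s : ℝ) (ω ω' Z : Finset α) :
    ∏ i, krawFactor r s (i ∈ ω) (i ∈ ω') (i ∈ Z)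
      = ∑ B ∈ (univ : Finset α).powerset, (s / (1 - s)) ^ #B *
          ((-(1 - s) / s) ^ #(B ∩ ω) * (-(1 - s) / s) ^ #(B ∩ ω') *
            (-(1 - r) / r) ^ #(B ∩ Z)) := by
  simp only [krawFactor, prod_one_add, prod_mul_distrib, prod_const, prod_ite_mem]
  simp [mul_assoc]

theorem sum_powersetCard_prod_krawFactor (x y z : ℕ) (r s : ℝ) :
    ∑ ω ∈ (univ : Finset α).powersetCard x, ∑ ω' ∈ (univ : Finset α).powersetCard y,
      ∑ Z ∈ (univ : Finset α).powersetCard z,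
        ∏ i, krawFactor r s (i ∈ ω) (i ∈ ω') (i ∈ Z)
      = (Fintype.card α).choose x * (Fintype.card α).choose y * (Fintype.card α).choose z *
          krawTripleSum (Fintype.card α) x y z r s := by
  set N := Fintype.card α
  calc _ = ∑ B ∈ (univ : Finset α).powerset, (s / (1 - s)) ^ #B *
          ∑ ω ∈ (univ : Finset α).powersetCard x,
            ∑ ω' ∈ (univ : Finset α).powersetCard y,
              ∑ Z ∈ (univ : Finset α).powersetCard z,
                (-(1 - s) / s) ^ #(B ∩ ω) * (-(1 - s) / s) ^ #(B ∩ ω') *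
                  (-(1 - r) / r) ^ #(B ∩ Z) := by
        simp only [prod_krawFactor_eq_sum_powerset, mul_sum]
        simp only [sum_comm (t := (univ : Finset α).powerset)]
    _ = ∑ B ∈ (univ : Finset α).powerset, (s / (1 - s)) ^ #B *
          (N.choose x * kraw N #B x s * (N.choose y * kraw N #B y s) *
            (N.choose z * kraw N #B z r)) := by
        simp only [← sum_mul_sum_mul_sum, sum_powersetCard_pow_card_inter_eq_kraw, N]
    _ = _ := by
        rw [sum_powerset_apply_card (fun n => (s / (1 - s)) ^ n * (N.choose x * kraw N n x s *
          (N.choose y * kraw N n y s) * (N.choose z * kraw N n z r))), card_univ, krawTripleSum,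
          mul_sum]
        refine sum_congr rfl fun n _ => ?_
        rw [nsmul_eq_mul]
        ring

end Subsets

theorem krawTripleSum_self_self_one {N : ℕ} (hN : 0 < N) (r s : ℝ) :
    krawTripleSum N N N 1 r s
      = krawFactor r s True True True * krawFactor r s True True False ^ (N - 1) := by
  have h := sum_powersetCard_prod_krawFactor (α := Fin N) N N 1 r s
  have huniv : (univ : Finset (Fin N)).powersetCard N = {univ} := by
    simpa using powersetCard_self (univ : Finset (Fin N))
  have hfactor : ∀ (Z : Finset (Fin N)) i, krawFactor r s (i ∈ univ) (i ∈ univ) (i ∈ Z)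
      = if i ∈ Z then krawFactor r s True True True else krawFactor r s True True False := by
    intro Z i
    split_ifs with hi <;> simp [krawFactor, hi]
  simp only [huniv, sum_singleton, hfactor, sum_powersetCard_one_prod_ite, Fintype.card_fin,
    Nat.choose_self, Nat.choose_one_right, Nat.cast_one, one_mul] at h
  exact (mul_left_cancel₀ (Nat.cast_ne_zero.mpr hN.ne') h).symm

theorem krawTripleSum_zero_zero_one {N : ℕ} (hN : 0 < N) (r s : ℝ) :
    krawTripleSum N 0 0 1 r s
      = krawFactor r s False False True * krawFactor r s False False False ^ (N - 1) := by
  have h := sum_powersetCard_prod_krawFactor (α := Fin N) 0 0 1 r s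
  have hfactor : ∀ (Z : Finset (Fin N)) i,
      krawFactor r s (i ∈ (∅ : Finset (Fin N))) (i ∈ (∅ : Finset (Fin N))) (i ∈ Z)
        = if i ∈ Z then krawFactor r s False False True
          else krawFactor r s False False False := by
    intro Z i
    split_ifs with hi <;> simp [krawFactor, hi]
  simp only [powersetCard_zero, sum_singleton, hfactor, sum_powersetCard_one_prod_ite,
    Fintype.card_fin, Nat.choose_zero_right, Nat.choose_one_right, Nat.cast_one, one_mul] at h
  exact (mul_left_cancel₀ (Nat.cast_ne_zero.mpr hN.ne') h).symm

section KrawFactor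

variable {r s : ℝ}

theorem krawFactor_true_true_true_nonneg_iff (hr : 0 < r) (hs : s ∈ Set.Ioo (0 : ℝ) 1) :
    0 ≤ krawFactor r s True True True ↔ 1 - r ≤ s := by
  have hs0 : s ≠ 0 := hs.1.ne'
  have hs1 : 1 - s ≠ 0 := by linarith [hs.2]
  have hval : krawFactor r s True True True = (r + s - 1) / (r * s) := by
    simp only [krawFactor, if_true]
    field_simp
    ring
  rw [hval, le_div_iff₀ (mul_pos hr hs.1), zero_mul]
  constructor <;> intro <;> linarith

theorem krawFactor_false_false_true_nonneg_iff (hr : 0 < r) (hs : s ∈ Set.Ioo (0 : ℝ) 1) :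
    0 ≤ krawFactor r s False False True ↔ s ≤ r := by
  have hs1 : 0 < 1 - s := by linarith [hs.2]
  have hval : krawFactor r s False False True = (r - s) / (r * (1 - s)) := by
    simp only [krawFactor, if_true, if_false]
    field_simp
    ring
  rw [hval, le_div_iff₀ (mul_pos hr hs1), zero_mul, sub_nonneg]

theorem krawFactor_true_true_false_pos (hs : s ∈ Set.Ioo (0 : ℝ) 1) :
    0 < krawFactor r s True True False := by
  have hs0 : s ≠ 0 := hs.1.ne'
  have hs1 : 1 - s ≠ 0 := by linarith [hs.2]
  have hval : krawFactor r s True True False = 1 / s := by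
    simp only [krawFactor, if_true, if_false]
    field_simp
    ring
  rw [hval]
  exact one_div_pos.mpr hs.1

theorem krawFactor_false_false_false_pos (hs : s ∈ Set.Ioo (0 : ℝ) 1) :
    0 < krawFactor r s False False False := by
  have hs1 : 0 < 1 - s := by linarith [hs.2]
  have hval : krawFactor r s False False False = 1 / (1 - s) := by
    simp only [krawFactor, if_false]
    field_simp
    ring
  rw [hval]
  exact one_div_pos.mpr hs1

theorem krawFactor_nonneg (hs : s ∈ Set.Ioo (0 : ℝ) 1) (hrs : 1 - r ≤ s) (hsr : s ≤ r)
    (p q u : Prop) [Decidable p] [Decidable q] [Decidable u] :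
    0 ≤ krawFactor r s p q u := by
  obtain ⟨hs0, hs1⟩ := hs
  have hs1' : 0 < 1 - s := by linarith
  have hr : 0 < r := by linarith
  unfold krawFactor
  split_ifs <;> field_simp <;> nlinarith

end KrawFactor

/-- The triple product sum of univariate Krawtchouk polynomials
`Σ_{n=0}^N C(N,n)(s/(1−s))^n Q_n(x;N,s) Q_n(y;N,s) Q_n(z;N,r)` is nonnegative for all
`x, y, z ∈ {0,…,N}` if and only if `1−r ≤ min(s, 1−s)`. -/
theorem krawtchouk_triple_product_nonneg_iff (N : ℕ) (hN : 0 < N)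
    (r s : ℝ) (hr : r ∈ Set.Ioo (0 : ℝ) 1) (hs : s ∈ Set.Ioo (0 : ℝ) 1) :
    (∀ x ≤ N, ∀ y ≤ N, ∀ z ≤ N,
        0 ≤ ∑ n ∈ Finset.range (N + 1),
              (N.choose n : ℝ) * (s / (1 - s)) ^ n *
                kraw N n x s * kraw N n y s * kraw N n z r)
      ↔ 1 - r ≤ min s (1 - s) := by
  constructor
  · intro H
    have hNN : 0 ≤ krawTripleSum N N N 1 r s := H N le_rfl N le_rfl 1 hN
    have h00 : 0 ≤ krawTripleSum N 0 0 1 r s := H 0 N.zero_le 0 N.zero_le 1 hN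
    rw [krawTripleSum_self_self_one hN] at hNN
    rw [krawTripleSum_zero_zero_one hN] at h00
    have hrs := (krawFactor_true_true_true_nonneg_iff hr.1 hs).mp
      (nonneg_of_mul_nonneg_left hNN (pow_pos (krawFactor_true_true_false_pos hs) _))
    have hsr := (krawFactor_false_false_true_nonneg_iff hr.1 hs).mp
      (nonneg_of_mul_nonneg_left h00 (pow_pos (krawFactor_false_false_false_pos hs) _))
    exact le_min hrs (by linarith)
  · intro h x hx y hy z hz
    have hfactor := krawFactor_nonneg hs (h.trans (min_le_left _ _))
      (by linarith [h.trans (min_le_right _ _)])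
    have hsum := sum_powersetCard_prod_krawFactor (α := Fin N) x y z r s
    rw [Fintype.card_fin] at hsum
    have hpos : (0 : ℝ) < N.choose x * N.choose y * N.choose z := by
      have := Nat.choose_pos hx; have := Nat.choose_pos hy; have := Nat.choose_pos hz
      positivity
    refine nonneg_of_mul_nonneg_right (hsum ▸ ?_) hpos
    exact sum_nonneg fun _ _ => sum_nonneg fun _ _ => sum_nonneg fun _ _ =>
      prod_nonneg fun _ _ => hfactor _ _ _
end
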